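/- arXiv:1309.5985 — 2 statements merged into one kernel-verified Lean document; each statement's English description precedes it below -/
import Mathlib

section
/- Let S be a finite set of k ≥ 2 distinct positive integers with smallest element s_1 and largest element s_k. Then CM(S) ≤ 2 + ⌊log₂(s_k − s_1)⌋. -/
/-- The Cookie Monster number of a finite set `S` of jar contents: the least `n`
for which there exist positive move amounts `a_1, …, a_n` such that every `s ∈ S`
is the sum of a subset of the move amounts. -/
noncomputable def CM (S : Finset ℕ) : ℕ :=
  sInf {n : ℕ | ∃ a : Fin n → ℕ, (∀ i, 0 < a i) ∧
    ∀ s ∈ S, ∃ I : Finset (Fin n), ∑ i ∈ I, a i = s}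

/-!
Take the moves `s₁, 1, 2, 4, …, 2 ^ L` with `L = ⌊log₂ (s_k − s₁)⌋`. Every `s ∈ S` is `s₁` plus
`s − s₁ < 2 ^ (L + 1)`, and the latter is a sum of distinct powers `2 ^ i` with `i ≤ L` by its
binary expansion.
-/

open Finset

def subsetSums {ι M : Type*} [AddCommMonoid M] (a : ι → M) : Set M :=
  {s | ∃ I : Finset ι, ∑ i ∈ I, a i = s}

theorem CM_le_of_subset_subsetSums {S : Finset ℕ} {n : ℕ} (a : Fin n → ℕ) (ha : ∀ i, 0 < a i)
    (hS : ↑S ⊆ subsetSums a) : CM S ≤ n :=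
  Nat.sInf_le ⟨a, ha, fun _ hs => hS hs⟩

theorem add_mem_subsetSums_cons {M : Type*} [AddCommMonoid M] {n : ℕ} {a : Fin n → M} {s : M}
    (c : M) (hs : s ∈ subsetSums a) : c + s ∈ subsetSums (Fin.cons c a : Fin (n + 1) → M) := by
  obtain ⟨I, rfl⟩ := hs
  refine ⟨insert 0 (I.map (Fin.succEmb n)), ?_⟩
  rw [sum_insert (by simp [Fin.succ_ne_zero]), sum_map]
  simp

theorem mem_subsetSums_two_pow {n m : ℕ} (hm : m < 2 ^ n) :
    m ∈ subsetSums (fun i : Fin n => 2 ^ (i : ℕ)) := by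
  have hlt : ∀ i ∈ m.bitIndices.toFinset, i < n := fun i hi =>
    (Nat.pow_lt_pow_iff_right (by norm_num)).1
      ((Nat.two_pow_le_of_mem_bitIndices (List.mem_toFinset.1 hi)).trans_lt hm)
  refine ⟨m.bitIndices.toFinset.attachFin hlt, ?_⟩
  change ∑ i ∈ _, 2 ^ Fin.valEmbedding i = m
  rw [← sum_map, map_valEmbedding_attachFin, sum_toFinset_bitIndices_two_pow]

theorem cm_le_log_diameter_general (S : Finset ℕ) (hpos : ∀ s ∈ S, 0 < s)
    (hne : S.Nonempty) :
    CM S ≤ 2 + Nat.log 2 (S.max' hne - S.min' hne) := by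
  set L := Nat.log 2 (S.max' hne - S.min' hne)
  have hdiam : S.max' hne - S.min' hne < 2 ^ (L + 1) := Nat.lt_pow_succ_log_self (by norm_num) _
  rw [add_comm]
  refine CM_le_of_subset_subsetSums (Fin.cons (S.min' hne) fun i : Fin (L + 1) => 2 ^ (i : ℕ))
    (Fin.cases (hpos _ (S.min'_mem hne)) fun i => Nat.two_pow_pos i) fun s hs => ?_
  have hmin : S.min' hne ≤ s := S.min'_le s hs
  have hs_sub : s - S.min' hne < 2 ^ (L + 1) :=
    (Nat.sub_le_sub_right (S.le_max' s hs) _).trans_lt hdiam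
  simpa [Nat.add_sub_cancel' hmin] using
    add_mem_subsetSums_cons (S.min' hne) (mem_subsetSums_two_pow hs_sub)

/-- `CM(S) ≤ 2 + ⌊log₂ (s_k − s_1)⌋` where `s_1` and `s_k` are the smallest and
largest elements of a set `S` with at least two elements. -/
theorem cm_le_log_diameter (S : Finset ℕ) (hpos : ∀ s ∈ S, 0 < s)
    (hcard : 2 ≤ S.card) (hne : S.Nonempty) :
    CM S ≤ 2 + Nat.log 2 (S.max' hne - S.min' hne) :=
  cm_le_log_diameter_general S hpos hne
end

section
/- Let n ≥ 2 and let M_i = N_{n+i-1} denote the i-th n-nacci jar value. Then for every positive integer k, M_{k+n-1} − ∑_{i=k+1}^{k+n-2} M_i > ∑_{i=1}^{k-1} M_i. -/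
/-- The n-nacci sequence: `N i = 0` for `i < n - 1`, `N (n-1) = 1`, and each
subsequent term is the sum of the previous `n` terms. -/
def nnacci (n : ℕ) : ℕ → ℕ
  | i =>
    if i < n - 1 then 0
    else if _h : i = n - 1 then 1
    else ∑ j ∈ (Finset.range n).attach, nnacci n (i - n + j.1)
decreasing_by
  have hj := j.2
  simp only [Finset.mem_range] at hj
  omega

lemma nnacci_zero (n i : ℕ) (h : i < n - 1) : nnacci n i = 0 := by
  rw [nnacci, if_pos h]

lemma nnacci_base (n : ℕ) : nnacci n (n - 1) = 1 := by
  rw [nnacci, if_neg (lt_irrefl _), dif_pos rfl]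

lemma nnacci_rec (n i : ℕ) (hn : 2 ≤ n) (hi : n ≤ i) :
    nnacci n i = ∑ j ∈ Finset.range n, nnacci n (i - n + j) := by
  rw [nnacci, if_neg (by omega), dif_neg (by omega)]
  exact Finset.sum_attach (Finset.range n) (fun j => nnacci n (i - n + j))

lemma nnacci_step (n m : ℕ) (hn : 2 ≤ n) (hm : n - 1 ≤ m) :
    nnacci n m + nnacci n (m - 1) ≤ nnacci n (m + 1) := by
  rw [nnacci_rec n (m + 1) hn (by omega)]
  have hsub : ({n - 2, n - 1} : Finset ℕ) ⊆ Finset.range n := by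
    intro x hx
    simp only [Finset.mem_insert, Finset.mem_singleton] at hx
    simp only [Finset.mem_range]
    omega
  have h2 : ∑ j ∈ ({n - 2, n - 1} : Finset ℕ), nnacci n (m + 1 - n + j) =
      nnacci n (m - 1) + nnacci n m := by
    rw [Finset.sum_pair (by omega : n - 2 ≠ n - 1)]
    have e1 : m + 1 - n + (n - 2) = m - 1 := by omega
    have e2 : m + 1 - n + (n - 1) = m := by omega
    rw [e1, e2]
  calc nnacci n m + nnacci n (m - 1)
      = ∑ j ∈ ({n - 2, n - 1} : Finset ℕ), nnacci n (m + 1 - n + j) := by rw [h2, add_comm]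
    _ ≤ ∑ j ∈ Finset.range n, nnacci n (m + 1 - n + j) :=
        Finset.sum_le_sum_of_subset hsub

lemma nnacci_sum_lt (n : ℕ) (hn : 2 ≤ n) :
    ∀ m, n - 1 ≤ m → ∑ j ∈ Finset.range m, nnacci n j < nnacci n m + nnacci n (m - 1) := by
  intro m hm
  induction m, hm using Nat.le_induction with
  | base =>
    have hz : ∑ j ∈ Finset.range (n - 1), nnacci n j = 0 := by
      apply Finset.sum_eq_zero
      intro j hj
      exact nnacci_zero n j (Finset.mem_range.mp hj)
    rw [hz, nnacci_base]
    omega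
  | succ m hm ih =>
    rw [Finset.sum_range_succ]
    have hstep := nnacci_step n m hn hm
    have e : m + 1 - 1 = m := by omega
    rw [e]
    omega

/-- With jar values `M_i = N_{n+i-1}`, one has
`M_{k+n-1} − ∑_{i=k+1}^{k+n-2} M_i > ∑_{i=1}^{k-1} M_i`. -/
theorem nnacci_diff_gt_sum_below (n : ℕ) (hn : 2 ≤ n) (k : ℕ) (hk : 0 < k) :
    ∑ i ∈ Finset.Icc 1 (k - 1), nnacci n (n + i - 1) <
      nnacci n (n + (k + n - 1) - 1) -
        ∑ i ∈ Finset.Icc (k + 1) (k + n - 2), nnacci n (n + i - 1) := by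
  -- Rewrite the big term via the recurrence
  have h1 : nnacci n (n + (k + n - 1) - 1) =
      ∑ j ∈ Finset.range n, nnacci n (n + k - 2 + j) := by
    have e : n + (k + n - 1) - 1 = 2 * n + k - 2 := by omega
    rw [e, nnacci_rec n _ hn (by omega)]
    apply Finset.sum_congr rfl
    intro j _
    congr 1
    omega
  -- Split off the first two terms of that sum
  have h2 : ∑ j ∈ Finset.range n, nnacci n (n + k - 2 + j) =
      nnacci n (n + k - 2) + nnacci n (n + k - 1) +
        ∑ i ∈ Finset.Icc (k + 1) (k + n - 2), nnacci n (n + i - 1) := by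
    rw [Finset.range_eq_Ico,
        ← Finset.sum_Ico_consecutive (fun j => nnacci n (n + k - 2 + j))
          (by omega : 0 ≤ 2) hn]
    have hfirst : ∑ j ∈ Finset.Ico 0 2, nnacci n (n + k - 2 + j) =
        nnacci n (n + k - 2) + nnacci n (n + k - 1) := by
      have : Finset.Ico 0 2 = Finset.range 2 := by rw [Finset.range_eq_Ico]
      rw [this, Finset.sum_range_succ, Finset.sum_range_succ, Finset.sum_range_zero]
      have e1 : n + k - 2 + 0 = n + k - 2 := by omega
      have e2 : n + k - 2 + 1 = n + k - 1 := by omega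
      rw [e1, e2, zero_add]
    have hrest : ∑ j ∈ Finset.Ico 2 n, nnacci n (n + k - 2 + j) =
        ∑ i ∈ Finset.Icc (k + 1) (k + n - 2), nnacci n (n + i - 1) := by
      apply Finset.sum_nbij' (fun j => j + k - 1) (fun i => i - k + 1)
      · intro a ha
        simp only [Finset.mem_Ico] at ha
        simp only [Finset.mem_Icc]
        omega
      · intro a ha
        simp only [Finset.mem_Icc] at ha
        simp only [Finset.mem_Ico]
        omega
      · intro a ha
        simp only [Finset.mem_Ico] at ha
        omega
      · intro a ha
        simp only [Finset.mem_Icc] at ha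
        omega
      · intro a ha
        simp only [Finset.mem_Ico] at ha
        congr 1
        omega
    rw [hfirst, hrest]
  -- Bound the left-hand sum
  have h3 : ∑ i ∈ Finset.Icc 1 (k - 1), nnacci n (n + i - 1) ≤
      ∑ j ∈ Finset.range (n + k - 1), nnacci n j := by
    have heq : ∑ i ∈ Finset.Icc 1 (k - 1), nnacci n (n + i - 1) =
        ∑ j ∈ Finset.Icc n (n + k - 2), nnacci n j := by
      apply Finset.sum_nbij' (fun i => n + i - 1) (fun j => j - n + 1)
      · intro a ha
        simp only [Finset.mem_Icc] at ha ⊢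
        omega
      · intro a ha
        simp only [Finset.mem_Icc] at ha ⊢
        omega
      · intro a ha
        simp only [Finset.mem_Icc] at ha
        omega
      · intro a ha
        simp only [Finset.mem_Icc] at ha
        omega
      · intro a _
        rfl
    rw [heq]
    apply Finset.sum_le_sum_of_subset
    intro x hx
    simp only [Finset.mem_Icc] at hx
    simp only [Finset.mem_range]
    omega
  have h4 := nnacci_sum_lt n hn (n + k - 1) (by omega)
  have e : n + k - 1 - 1 = n + k - 2 := by omega
  rw [e] at h4
  rw [h1, h2]
  omega
end
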